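/- Let G be an r-regular finite simple graph with n vertices and m edges. Then NK(G^{---}) = (m+n-2r-1)^(m+n). -/

import Mathlib

open Finset

variable {V : Type*}

/-- The Narumi–Katayama index: the product of the degrees of all vertices. -/
def NK {W : Type*} [Fintype W] (H : SimpleGraph W) [DecidableRel H.Adj] : ℕ :=
  ∏ v, H.degree v

/-- The first Zagreb index: the sum of the squares of the degrees. -/
def M1 [Fintype V] (G : SimpleGraph V) [DecidableRel G.Adj] : ℕ :=
  ∑ v, (G.degree v) ^ 2

/-- The multiplicative sum Zagreb index: the product over the edges of `G` of the
sum of the degrees of the two endpoints. -/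
def Pi1Star [Fintype V] [DecidableEq V] (G : SimpleGraph V) [DecidableRel G.Adj] : ℕ :=
  ∏ e ∈ G.edgeFinset,
    Sym2.lift ⟨fun u v => G.degree u + G.degree v, fun u v => by simp [Nat.add_comm]⟩ e

/-- A generic transformation graph on the vertex set `V(G) ∪ E(G)`, built from a
symmetric irreflexive relation `Rvv` between vertices, a symmetric irreflexive relation
`Ree` between edges, and an incidence relation `Rve` between vertices and edges. -/
def transGraph (G : SimpleGraph V) (Rvv : V → V → Prop) (Ree : Sym2 V → Sym2 V → Prop)
    (Rve : V → Sym2 V → Prop)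
    (hvv : Symmetric Rvv) (hvv' : Irreflexive Rvv)
    (hee : Symmetric Ree) (hee' : Irreflexive Ree) :
    SimpleGraph (V ⊕ G.edgeSet) where
  Adj a b :=
    match a, b with
    | Sum.inl u, Sum.inl v => Rvv u v
    | Sum.inr e, Sum.inr f => Ree e.1 f.1
    | Sum.inl u, Sum.inr e => Rve u e.1
    | Sum.inr e, Sum.inl u => Rve u e.1
  symm := .mk <| by
    rintro (u | e) (v | f) h
    · exact hvv h
    · exact h
    · exact h
    · exact hee h
  loopless := .mk <| by
    rintro (u | e) h
    · exact hvv' u h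
    · exact hee' e.1 h

instance transGraph.instDecidableAdj (G : SimpleGraph V) (Rvv : V → V → Prop)
    (Ree : Sym2 V → Sym2 V → Prop) (Rve : V → Sym2 V → Prop)
    (h1 : Symmetric Rvv) (h2 : Irreflexive Rvv) (h3 : Symmetric Ree) (h4 : Irreflexive Ree)
    [DecidableRel Rvv] [DecidableRel Ree] [∀ u e, Decidable (Rve u e)] :
    DecidableRel (transGraph G Rvv Ree Rve h1 h2 h3 h4).Adj := fun a b =>
  match a, b with
  | Sum.inl u, Sum.inl v => inferInstanceAs (Decidable (Rvv u v))
  | Sum.inr e, Sum.inr f => inferInstanceAs (Decidable (Ree e.1 f.1))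
  | Sum.inl u, Sum.inr e => inferInstanceAs (Decidable (Rve u e.1))
  | Sum.inr e, Sum.inl u => inferInstanceAs (Decidable (Rve u e.1))

/-- Two edges (as elements of `Sym2 V`) are adjacent: distinct and sharing an endpoint. -/
abbrev shareRel : Sym2 V → Sym2 V → Prop := fun e f => e ≠ f ∧ ∃ w, w ∈ e ∧ w ∈ f

lemma shareRel_symm : Symmetric (shareRel (V := V)) :=
  fun _ _ h => ⟨h.1.symm, h.2.imp fun _ hw => ⟨hw.2, hw.1⟩⟩

lemma shareRel_irrefl : Irreflexive (shareRel (V := V)) := fun _ h => h.1 rfl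

/-- Two edges are "non-adjacent": distinct and sharing no endpoint. -/
abbrev coshareRel : Sym2 V → Sym2 V → Prop := fun e f => e ≠ f ∧ ∀ w, w ∈ e → w ∉ f

lemma coshareRel_symm : Symmetric (coshareRel (V := V)) :=
  fun _ _ h => ⟨h.1.symm, fun w hf he => h.2 w he hf⟩

lemma coshareRel_irrefl : Irreflexive (coshareRel (V := V)) := fun _ h => h.1 rfl

/-- Non-adjacency of distinct vertices. -/
abbrev coAdj (G : SimpleGraph V) : V → V → Prop := fun u v => u ≠ v ∧ ¬ G.Adj u v

lemma coAdj_symm (G : SimpleGraph V) : Symmetric (coAdj G) :=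
  fun _ _ h => ⟨h.1.symm, fun ha => h.2 ha.symm⟩

lemma coAdj_irrefl (G : SimpleGraph V) : Irreflexive (coAdj G) := fun _ h => h.1 rfl

variable [Fintype V] [DecidableEq V]

/-- The total transformation graph `G^{---}`. -/
abbrev Gmmm (G : SimpleGraph V) [DecidableRel G.Adj] : SimpleGraph (V ⊕ G.edgeSet) :=
  transGraph G (coAdj G) coshareRel (fun u e => u ∉ e)
    (coAdj_symm G) (coAdj_irrefl G) coshareRel_symm coshareRel_irrefl


/-!
Every vertex and every edge of `G^{---}` has degree `m + n - 2r - 1` when `G` is `r`-regular.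
A vertex `u` is adjacent to its `n - 1 - d(u)` non-neighbours and to the `m - d(u)` edges missing
it. An edge `ab` is adjacent to the `n - 2` vertices other than `a, b` and to the edges meeting
neither `a` nor `b`; the edges at `a` and those at `b` overlap exactly in `ab`, so there are
`m - (d(a) + d(b) - 1)` of these. Hence `G^{---}` is regular and `NK` is that degree to the power
`n + m`.
-/

lemma NK_eq_pow_of_isRegularOfDegree {W : Type*} [Fintype W] {H : SimpleGraph W}
    [DecidableRel H.Adj] {d : ℕ} (h : H.IsRegularOfDegree d) : NK H = d ^ Fintype.card W := by
  rw [NK, prod_congr rfl fun v _ => h v, prod_const, card_univ]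

namespace SimpleGraph

lemma card_filter_adj_eq_degree {W : Type*} [Fintype W] (H : SimpleGraph W) [DecidableRel H.Adj]
    (w : W) : #{v | H.Adj w v} = H.degree w := by
  rw [← card_neighborFinset_eq_degree, neighborFinset_eq_filter]

lemma degree_eq_card_inl_add_card_inr {α β : Type*} [Fintype α] [Fintype β]
    (H : SimpleGraph (α ⊕ β)) [DecidableRel H.Adj] (x : α ⊕ β) :
    H.degree x = #{a | H.Adj x (.inl a)} + #{b | H.Adj x (.inr b)} := by
  rw [← card_filter_adj_eq_degree, card_filter, Fintype.sum_sum_type, ← card_filter,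
    ← card_filter]

variable (G : SimpleGraph V) [DecidableRel G.Adj]

omit [DecidableEq V] in
lemma card_filter_univ_edgeSet (p : Sym2 V → Prop) [DecidablePred p] :
    #{e : G.edgeSet | p e} = #{e ∈ G.edgeFinset | p e} := by
  rw [← card_map (Function.Embedding.subtype _)]
  congr 1
  ext e
  simp [and_comm]

lemma card_filter_not_mem_edgeFinset (u : V) :
    #{e ∈ G.edgeFinset | u ∉ e} = #G.edgeFinset - G.degree u := by
  rw [filter_not, ← incidenceFinset_eq_filter, card_sdiff_of_subset (G.incidenceFinset_subset u),
    card_incidenceFinset_eq_degree]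

lemma card_incidenceFinset_union_of_adj {a b : V} (hab : G.Adj a b) :
    #(G.incidenceFinset a ∪ G.incidenceFinset b) + 1 = G.degree a + G.degree b := by
  have hinter : G.incidenceFinset a ∩ G.incidenceFinset b = {s(a, b)} := by
    rw [← coe_inj, coe_inter, coe_incidenceFinset, coe_incidenceFinset,
      incidenceSet_inter_incidenceSet_of_adj G hab, coe_singleton]
  rw [← card_incidenceFinset_eq_degree, ← card_incidenceFinset_eq_degree,
    ← card_union_add_card_inter, hinter, card_singleton]

lemma card_filter_not_mem_and_not_mem_edgeFinset_add_of_adj {a b : V} (hab : G.Adj a b) :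
    #{e ∈ G.edgeFinset | a ∉ e ∧ b ∉ e} + (G.degree a + G.degree b) = #G.edgeFinset + 1 := by
  have hsplit : {e ∈ G.edgeFinset | a ∉ e ∧ b ∉ e} =
      G.edgeFinset \ (G.incidenceFinset a ∪ G.incidenceFinset b) := by
    rw [incidenceFinset_eq_filter, incidenceFinset_eq_filter, ← filter_or, ← filter_not]
    simp only [not_or]
  have hsub : G.incidenceFinset a ∪ G.incidenceFinset b ⊆ G.edgeFinset :=
    union_subset (G.incidenceFinset_subset a) (G.incidenceFinset_subset b)
  have hcard := card_le_card hsub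
  rw [hsplit, card_sdiff_of_subset hsub, ← card_incidenceFinset_union_of_adj G hab]
  omega

end SimpleGraph

section Adjacency

omit [Fintype V] [DecidableEq V]

lemma coshareRel_mk_iff {a b : V} {f : Sym2 V} : coshareRel s(a, b) f ↔ a ∉ f ∧ b ∉ f := by
  simp only [coshareRel, ne_eq, Sym2.mem_iff, forall_eq_or_imp, forall_eq, and_iff_right_iff_imp,
    and_imp]
  rintro ha - rfl
  exact ha (Sym2.mem_mk_left a b)

variable (G : SimpleGraph V) [DecidableRel G.Adj]

@[simp] lemma Gmmm.adj_inl_inl {u v : V} : (Gmmm G).Adj (.inl u) (.inl v) ↔ Gᶜ.Adj u v :=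
  Iff.rfl

@[simp] lemma Gmmm.adj_inl_inr {u : V} {e : G.edgeSet} :
    (Gmmm G).Adj (.inl u) (.inr e) ↔ u ∉ e.1 :=
  Iff.rfl

@[simp] lemma Gmmm.adj_inr_inl {e : G.edgeSet} {u : V} :
    (Gmmm G).Adj (.inr e) (.inl u) ↔ u ∉ e.1 :=
  Iff.rfl

@[simp] lemma Gmmm.adj_inr_inr {e f : G.edgeSet} :
    (Gmmm G).Adj (.inr e) (.inr f) ↔ coshareRel e.1 f.1 :=
  Iff.rfl

end Adjacency

namespace Gmmm

open SimpleGraph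

variable (G : SimpleGraph V) [DecidableRel G.Adj]

lemma degree_inl (u : V) :
    (Gmmm G).degree (.inl u) = #G.edgeFinset + Fintype.card V - 2 * G.degree u - 1 := by
  have hV := G.degree_lt_card_verts u
  have hE := G.degree_le_card_edgeFinset u
  calc (Gmmm G).degree (.inl u) = Gᶜ.degree u + #{e ∈ G.edgeFinset | u ∉ e} := by
        rw [degree_eq_card_inl_add_card_inr, ← card_filter_univ_edgeSet G (fun e => u ∉ e),
          ← card_filter_adj_eq_degree]
        simp only [adj_inl_inl, adj_inl_inr]
    _ = (Fintype.card V - 1 - G.degree u) + (#G.edgeFinset - G.degree u) := by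
        rw [degree_compl, card_filter_not_mem_edgeFinset]
    _ = #G.edgeFinset + Fintype.card V - 2 * G.degree u - 1 := by omega

lemma degree_inr {a b : V} (he : s(a, b) ∈ G.edgeSet) :
    (Gmmm G).degree (.inr ⟨s(a, b), he⟩) =
      #G.edgeFinset + Fintype.card V - (G.degree a + G.degree b) - 1 := by
  have hab : G.Adj a b := he
  have hverts : #{v | v ∉ s(a, b)} = Fintype.card V - 2 := by
    rw [← card_pair hab.ne, ← card_compl]
    congr 1
    ext v
    simp
  have hV : 2 ≤ Fintype.card V := card_pair hab.ne ▸ card_le_univ {a, b}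
  have hE := card_filter_not_mem_and_not_mem_edgeFinset_add_of_adj G hab
  rw [← card_filter_univ_edgeSet] at hE
  rw [degree_eq_card_inl_add_card_inr]
  simp only [adj_inr_inl, adj_inr_inr, coshareRel_mk_iff, hverts]
  omega

lemma isRegularOfDegree {r : ℕ} (hreg : G.IsRegularOfDegree r) :
    (Gmmm G).IsRegularOfDegree (#G.edgeFinset + Fintype.card V - 2 * r - 1) := by
  rintro (u | ⟨e, he⟩)
  · rw [degree_inl, hreg u]
  · induction e using Sym2.ind with
    | _ a b => rw [degree_inr, hreg a, hreg b, two_mul]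

end Gmmm

theorem stmt_8 (G : SimpleGraph V) [DecidableRel G.Adj]
    (r : ℕ)
    (hreg : G.IsRegularOfDegree r) :
    NK (Gmmm G) = (G.edgeFinset.card + Fintype.card V - 2 * r - 1) ^ (G.edgeFinset.card + Fintype.card V) := by
  rw [NK_eq_pow_of_isRegularOfDegree (Gmmm.isRegularOfDegree G hreg), Fintype.card_sum,
    add_comm, SimpleGraph.edgeFinset_card]
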